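/- Let k ≥ 1, let π_0,…,π_k be distinct reals and ω(0),…,ω(k) strictly positive reals, set w(π_k) = [[0, ω(k)],[0,0]], ρ_m = ω(m)^{−1}·∏_{0≤j≤k−1, j≠m}(π_m−π_j)^{−2} for 0 ≤ m ≤ k−1, and let m_k be the explicit matrix-valued function with entries: (1,1): (ζ−π_0)⋯(ζ−π_{k−1}); (1,2): 0; (2,1): (ζ−π_0)⋯(ζ−π_{k−1})·Σ_{m=0}^{k−1} ρ_m/(ζ−π_m); (2,2): ((ζ−π_0)⋯(ζ−π_{k−1}))^{−1}. Define q_k = (Σ_{m=0}^{k} [ω(m)^{−1}·∏_{0≤j≤k, j≠m}(π_m−π_j)^{−2}])^{−1}, p_k = −q_k·Σ_{m=0}^{k−1} ρ_m/(π_k−π_m), r_k = −q_k·(Σ_{m=0}^{k−1} ρ_m/(π_k−π_m))². Then A_k = [[p_k, q_k],[r_k, −p_k]] is the unique 2×2 complex matrix A satisfying both A·m_k(π_k)·w(π_k) = 0 and m_k(π_k)·w(π_k) + A·m_k′(π_k)·w(π_k) = A·m_k(π_k), where m_k′ denotes the derivative of m_k. -/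

import Mathlib

open Filter Topology Matrix

/-!
The first condition says that `A` annihilates `m_k(π_k) w`, whose only nonzero column is
`a ω (1, s)` with `a = Π(π_k) ≠ 0` and `s = Σ ρ_m / (π_k − π_m)`; so `A (1, s)ᵀ = 0`. Using this,
the second column of the second condition reduces to `(a⁻¹ + ω a T) · A e₂ = ω a (1, s)ᵀ`, where
`−T` is the derivative of `Σ ρ_m / (ζ − π_m)` at `π_k`. Hence `A = q (1, s)ᵀ (−s, 1)` with
`q⁻¹ = T + (ω a²)⁻¹`, and this is exactly the weight sum over `π_0, …, π_k` defining `q_k`, split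
into the terms `m < k` and `m = k`. Positivity of the weights makes that sum nonzero.
-/

noncomputable section

/-- 2×2 complex matrices. -/
abbrev Mat2 : Type := Matrix (Fin 2) (Fin 2) ℂ

/-- `Π(ζ) = (ζ−π₀)⋯(ζ−π_{k−1})`. -/
def Pik (k : ℕ) (π : ℕ → ℝ) (ζ : ℂ) : ℂ :=
  ∏ j ∈ Finset.range k, (ζ - (π j : ℂ))

/-- `ρ_m = ω(m)⁻¹ ∏_{0≤j≤k−1, j≠m} (π_m − π_j)⁻²`. -/
def rho (k : ℕ) (π ω : ℕ → ℝ) (m : ℕ) : ℂ :=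
  (ω m : ℂ)⁻¹ * ∏ j ∈ (Finset.range k).erase m, (((π m : ℂ) - (π j : ℂ)) ^ 2)⁻¹

/-- The explicit solution `m_k` of the DRHP on `{π₀,…,π_{k−1}}`. -/
def mkFun (k : ℕ) (π ω : ℕ → ℝ) (ζ : ℂ) : Mat2 :=
  !![Pik k π ζ, 0;
     Pik k π ζ * ∑ m ∈ Finset.range k, rho k π ω m / (ζ - (π m : ℂ)), (Pik k π ζ)⁻¹]

/-- The entrywise complex derivative of `m_k`. -/
def mkDeriv (k : ℕ) (π ω : ℕ → ℝ) (ζ : ℂ) : Mat2 :=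
  Matrix.of fun i j => deriv (fun z => mkFun k π ω z i j) ζ

/-- For `m̃ ζ = (1 + A / (ζ − π)) m ζ` with `m π = M`, `m' π = M'`: the first equation removes the
pole of `m̃ ζ * W` at `π`, the second says that `Res_π m̃ = A M` equals `lim_{ζ → π} m̃ ζ * W`. -/
def ResidueCondition (A M M' W : Mat2) : Prop :=
  A * (M * W) = 0 ∧ M * W + A * (M' * W) = A * M

theorem residueCondition_iff {a s d f T w : ℂ} (ha : a ≠ 0) (hw : w ≠ 0)
    (hT : T + (w * a ^ 2)⁻¹ ≠ 0) (A : Mat2) :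
    ResidueCondition A !![a, 0; a * s, a⁻¹] !![d, 0; d * s - a * T, f] !![0, w; 0, 0] ↔
      A = (T + (w * a ^ 2)⁻¹)⁻¹ • !![-s, 1; -s ^ 2, s] := by
  have hX_eq : a⁻¹ + w * a * T = w * a * (T + (w * a ^ 2)⁻¹) := by
    field_simp
    ring
  have hX : a⁻¹ + w * a * T ≠ 0 := hX_eq ▸ mul_ne_zero (mul_ne_zero hw ha) hT
  have hq : (T + (w * a ^ 2)⁻¹)⁻¹ * (a⁻¹ + w * a * T) = w * a := by
    rw [hX_eq, mul_left_comm, inv_mul_cancel₀ hT, mul_one]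
  generalize (T + (w * a ^ 2)⁻¹)⁻¹ = q at hq ⊢
  constructor
  · rintro ⟨h1, h2⟩
    have e0 : A 0 0 * (a * w) + A 0 1 * (a * s * w) = 0 := by
      simpa [Matrix.mul_apply, Fin.sum_univ_two] using congrFun₂ h1 0 1
    have e1 : A 1 0 * (a * w) + A 1 1 * (a * s * w) = 0 := by
      simpa [Matrix.mul_apply, Fin.sum_univ_two] using congrFun₂ h1 1 1
    have g0 : a * w + (A 0 0 * (d * w) + A 0 1 * ((d * s - a * T) * w)) = A 0 1 * a⁻¹ := by
      simpa [Matrix.mul_apply, Fin.sum_univ_two] using congrFun₂ h2 0 1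
    have g1 : a * s * w + (A 1 0 * (d * w) + A 1 1 * ((d * s - a * T) * w)) = A 1 1 * a⁻¹ := by
      simpa [Matrix.mul_apply, Fin.sum_univ_two] using congrFun₂ h2 1 1
    have hA00 : A 0 0 = -s * A 0 1 :=
      mul_right_cancel₀ (mul_ne_zero ha hw) (by linear_combination e0)
    have hA10 : A 1 0 = -s * A 1 1 :=
      mul_right_cancel₀ (mul_ne_zero ha hw) (by linear_combination e1)
    have hA01 : A 0 1 = q :=
      mul_right_cancel₀ hX (by linear_combination -g0 + d * w * hA00 - hq)
    have hA11 : A 1 1 = q * s :=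
      mul_right_cancel₀ hX (by linear_combination -g1 + d * w * hA10 - s * hq)
    ext i j
    fin_cases i <;> fin_cases j <;> simp [hA00, hA10, hA01, hA11] <;> ring
  · rintro rfl
    constructor <;> ext i j <;> fin_cases i <;> fin_cases j <;>
      simp [Matrix.mul_apply, Fin.sum_univ_two]
    all_goals first | ring1 | linear_combination -hq | linear_combination -s * hq

theorem hasDerivAt_sum_div_sub {ι : Type*} (s : Finset ι) (c p : ι → ℂ) {ζ : ℂ}
    (hζ : ∀ i ∈ s, ζ ≠ p i) :
    HasDerivAt (fun z => ∑ i ∈ s, c i / (z - p i)) (-∑ i ∈ s, c i / (ζ - p i) ^ 2) ζ := by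
  rw [← Finset.sum_neg_distrib]
  refine HasDerivAt.fun_sum fun i hi => ?_
  have h := (((hasDerivAt_id ζ).sub_const (p i)).inv (sub_ne_zero.2 (hζ i hi))).const_mul (c i)
  simpa [div_eq_mul_inv] using h

theorem differentiable_Pik (k : ℕ) (π : ℕ → ℝ) : Differentiable ℂ (Pik k π) := by
  unfold Pik
  fun_prop

theorem Pik_ne_zero {k : ℕ} {π : ℕ → ℝ} {ζ : ℂ} (hζ : ∀ m ∈ Finset.range k, ζ ≠ π m) :
    Pik k π ζ ≠ 0 :=
  Finset.prod_ne_zero_iff.2 fun m hm => sub_ne_zero.2 (hζ m hm)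

theorem mkDeriv_eq {k : ℕ} {π : ℕ → ℝ} (ω : ℕ → ℝ) {ζ : ℂ}
    (hζ : ∀ m ∈ Finset.range k, ζ ≠ π m) :
    mkDeriv k π ω ζ =
      !![deriv (Pik k π) ζ, 0;
        deriv (Pik k π) ζ * ∑ m ∈ Finset.range k, rho k π ω m / (ζ - π m) -
          Pik k π ζ * ∑ m ∈ Finset.range k, rho k π ω m / (ζ - π m) ^ 2,
        deriv (fun z => (Pik k π z)⁻¹) ζ] := by
  have h10 := ((differentiable_Pik k π ζ).hasDerivAt).mul
    (hasDerivAt_sum_div_sub _ (rho k π ω) (fun m => (π m : ℂ)) hζ)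
  ext i j
  fin_cases i <;> fin_cases j
  · rfl
  · exact deriv_const _ _
  · exact h10.deriv.trans (by simp [sub_eq_add_neg])
  · rfl

theorem rho_succ_of_lt {k m : ℕ} (π ω : ℕ → ℝ) (hm : m < k) :
    rho (k + 1) π ω m = rho k π ω m / ((π k : ℂ) - π m) ^ 2 := by
  rw [rho, rho, Finset.range_add_one, Finset.erase_insert_of_ne hm.ne',
    Finset.prod_insert (by simp), div_eq_mul_inv, ← neg_sub (π k : ℂ), neg_sq]
  ring

theorem rho_succ_self (k : ℕ) (π ω : ℕ → ℝ) :
    rho (k + 1) π ω k = ((ω k : ℂ) * Pik k π (π k) ^ 2)⁻¹ := by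
  rw [rho, Finset.range_add_one, Finset.erase_insert Finset.notMem_range_self,
    Finset.prod_inv_distrib, Finset.prod_pow, Pik, mul_inv]

theorem sum_rho_succ (k : ℕ) (π ω : ℕ → ℝ) :
    ∑ m ∈ Finset.range (k + 1), rho (k + 1) π ω m =
      ∑ m ∈ Finset.range k, rho k π ω m / ((π k : ℂ) - π m) ^ 2 +
        ((ω k : ℂ) * Pik k π (π k) ^ 2)⁻¹ := by
  rw [Finset.sum_range_succ, rho_succ_self]
  congr 1
  exact Finset.sum_congr rfl fun m hm => rho_succ_of_lt π ω (Finset.mem_range.1 hm)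

theorem sum_rho_ne_zero {n : ℕ} (hn : 0 < n) {π : ℕ → ℝ} (hπ : Set.InjOn π (Finset.range n))
    {ω : ℕ → ℝ} (hω : ∀ m < n, 0 < ω m) :
    ∑ m ∈ Finset.range n, rho n π ω m ≠ 0 := by
  have hreal : ∑ m ∈ Finset.range n, rho n π ω m =
      ((∑ m ∈ Finset.range n, (ω m)⁻¹ * ∏ j ∈ (Finset.range n).erase m, ((π m - π j) ^ 2)⁻¹
        : ℝ) : ℂ) := by
    push_cast
    rfl
  rw [hreal, Complex.ofReal_ne_zero]
  refine (Finset.sum_pos (fun m hm => mul_pos (inv_pos.2 (hω m (Finset.mem_range.1 hm)))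
    (Finset.prod_pos fun j hj => inv_pos.2 (sq_pos_of_ne_zero (sub_ne_zero.2 ?_))))
    ⟨0, Finset.mem_range.2 hn⟩).ne'
  exact fun h => Finset.ne_of_mem_erase hj (hπ (Finset.mem_of_mem_erase hj) hm h.symm)

theorem stmt13_general (k : ℕ)
    (π ω : ℕ → ℝ)
    (hπ : ∀ i ≤ k, ∀ j ≤ k, π i = π j → i = j)
    (hω : ∀ x ≤ k, 0 < ω x)
    (pk qk rk : ℂ)
    (hqk : qk = (∑ m ∈ Finset.range (k + 1), ((ω m : ℂ)⁻¹ *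
        ∏ j ∈ (Finset.range (k + 1)).erase m, (((π m : ℂ) - (π j : ℂ)) ^ 2)⁻¹))⁻¹)
    (hpk : pk = -qk * ∑ m ∈ Finset.range k, rho k π ω m / ((π k : ℂ) - (π m : ℂ)))
    (hrk : rk = -qk * (∑ m ∈ Finset.range k, rho k π ω m / ((π k : ℂ) - (π m : ℂ))) ^ 2) :
    (!![pk, qk; rk, -pk] * (mkFun k π ω (π k : ℂ) * !![0, (ω k : ℂ); 0, 0]) = 0 ∧
      mkFun k π ω (π k : ℂ) * !![0, (ω k : ℂ); 0, 0] +
          !![pk, qk; rk, -pk] * (mkDeriv k π ω (π k : ℂ) * !![0, (ω k : ℂ); 0, 0]) =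
        !![pk, qk; rk, -pk] * mkFun k π ω (π k : ℂ)) ∧
    (∀ A : Mat2,
      (A * (mkFun k π ω (π k : ℂ) * !![0, (ω k : ℂ); 0, 0]) = 0 ∧
        mkFun k π ω (π k : ℂ) * !![0, (ω k : ℂ); 0, 0] +
            A * (mkDeriv k π ω (π k : ℂ) * !![0, (ω k : ℂ); 0, 0]) =
          A * mkFun k π ω (π k : ℂ)) →
      A = !![pk, qk; rk, -pk]) := by
  have hζ : ∀ m ∈ Finset.range k, (π k : ℂ) ≠ π m := fun m hm h =>
    (Finset.mem_range.1 hm).ne' (hπ k le_rfl m (Finset.mem_range.1 hm).le (by exact_mod_cast h))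
  have hw : (ω k : ℂ) ≠ 0 := Complex.ofReal_ne_zero.2 (hω k le_rfl).ne'
  have hsum := sum_rho_ne_zero k.succ_pos
    (fun i hi j hj => hπ i (Finset.mem_range_succ_iff.1 hi) j (Finset.mem_range_succ_iff.1 hj))
    (fun m hm => hω m (Nat.lt_succ_iff.1 hm))
  change qk = (∑ m ∈ Finset.range (k + 1), rho (k + 1) π ω m)⁻¹ at hqk
  rw [sum_rho_succ] at hsum hqk
  have hiff := residueCondition_iff (Pik_ne_zero hζ) hw hsum
    (s := ∑ m ∈ Finset.range k, rho k π ω m / ((π k : ℂ) - π m))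
    (d := deriv (Pik k π) (π k)) (f := deriv (fun z => (Pik k π z)⁻¹) (π k))
  rw [← mkDeriv_eq ω hζ, ← hqk] at hiff
  have hAk : !![pk, qk; rk, -pk] =
      qk • !![-∑ m ∈ Finset.range k, rho k π ω m / ((π k : ℂ) - π m), 1;
        -(∑ m ∈ Finset.range k, rho k π ω m / ((π k : ℂ) - π m)) ^ 2,
        ∑ m ∈ Finset.range k, rho k π ω m / ((π k : ℂ) - π m)] := by
    subst hpk hrk
    ext i j
    fin_cases i <;> fin_cases j <;> simp
  exact ⟨(hiff _).2 hAk, fun A hA => ((hiff A).1 hA).trans hAk.symm⟩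

/-- the explicit matrix `A_k` is the unique matrix `A` satisfying
`A·m_k(π_k)·w(π_k) = 0` and `m_k(π_k)·w(π_k) + A·m_k′(π_k)·w(π_k) = A·m_k(π_k)`. -/
theorem stmt13 (k : ℕ) (hk : 1 ≤ k)
    (π ω : ℕ → ℝ)
    (hπ : ∀ i ≤ k, ∀ j ≤ k, π i = π j → i = j)
    (hω : ∀ x ≤ k, 0 < ω x)
    (pk qk rk : ℂ)
    (hqk : qk = (∑ m ∈ Finset.range (k + 1), ((ω m : ℂ)⁻¹ *
        ∏ j ∈ (Finset.range (k + 1)).erase m, (((π m : ℂ) - (π j : ℂ)) ^ 2)⁻¹))⁻¹)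
    (hpk : pk = -qk * ∑ m ∈ Finset.range k, rho k π ω m / ((π k : ℂ) - (π m : ℂ)))
    (hrk : rk = -qk * (∑ m ∈ Finset.range k, rho k π ω m / ((π k : ℂ) - (π m : ℂ))) ^ 2) :
    (!![pk, qk; rk, -pk] * (mkFun k π ω (π k : ℂ) * !![0, (ω k : ℂ); 0, 0]) = 0 ∧
      mkFun k π ω (π k : ℂ) * !![0, (ω k : ℂ); 0, 0] +
          !![pk, qk; rk, -pk] * (mkDeriv k π ω (π k : ℂ) * !![0, (ω k : ℂ); 0, 0]) =
        !![pk, qk; rk, -pk] * mkFun k π ω (π k : ℂ)) ∧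
    (∀ A : Mat2,
      (A * (mkFun k π ω (π k : ℂ) * !![0, (ω k : ℂ); 0, 0]) = 0 ∧
        mkFun k π ω (π k : ℂ) * !![0, (ω k : ℂ); 0, 0] +
            A * (mkDeriv k π ω (π k : ℂ) * !![0, (ω k : ℂ); 0, 0]) =
          A * mkFun k π ω (π k : ℂ)) →
      A = !![pk, qk; rk, -pk]) :=
  stmt13_general k π ω hπ hω pk qk rk hqk hpk hrk
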